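/- arXiv:1501.06098 — 2 statements merged into one kernel-verified Lean document; each statement's English description precedes it below -/
import Mathlib

section
/- Let δ, σ be positive integers with gcd(δ,σ) = 1 and δ < σ, and set D = σ⁴ − δ⁴. Let x, y be positive integers with x² − D·y² = 1, and let X₁, Y₁ be integers with X₁² − D·Y₁² = δ⁴. For an integer n define the rational numbers M_n = X₁·y·U_{n−1}(x) + Y₁·T_n(x), a_n = [ (σ²−δ²)(X₁ + (σ²+δ²)Y₁)·y·U_{n−1}(x) + (X₁ + (σ²−δ²)Y₁)·T_n(x) + δ² ] / (2δ²), and c_n = (σ/(2δ³))·M_n·[ (σ²X₁ + (σ⁴−δ⁴)Y₁)·y·U_{n−1}(x) + (X₁ + σ²Y₁)·T_n(x) ]. If M_n, a_n, c_n are positive integers, then S(M_n, a_n) = c_n². -/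
/-- `S M a` is the sum of `M` consecutive cubes starting at `a`. -/
def S (M : ℕ) (a : ℤ) : ℤ := ∑ i ∈ Finset.range M, (a + i) ^ 3

/-- `T n x` is the `n`-th Chebyshev polynomial of the first kind evaluated at `x`. -/
noncomputable def T (n : ℤ) (x : ℤ) : ℤ := (Polynomial.Chebyshev.T ℤ n).eval x

/-- `U n x` is the `n`-th Chebyshev polynomial of the second kind evaluated at `x`. -/
noncomputable def U (n : ℤ) (x : ℤ) : ℤ := (Polynomial.Chebyshev.U ℤ n).eval x

/-!
With `D = σ⁴ − δ⁴`, put `t + u√D = (x + y√D)ⁿ`, i.e. `t = Tₙ(x)`, `u = y·Uₙ₋₁(x)`, and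
`N + M√D = (X₁ + Y₁√D)(t + u√D)`, so that `N² − D·M² = δ⁴`. The definitions of `a` and `c`
read `2δ²a = N + (σ² − δ²)M + δ²` and `2δ³c = σM(N + σ²M)`. By Nicomachus,
`4·S(M, a) = ((a+M−1)(a+M))² − ((a−1)a)² = M(2a+M−1)·((a+M−1)(a+M) + (a−1)a)`;
here `δ²(2a+M−1) = N + σ²M`, and the norm equation turns the last factor into
`σ²M(N + σ²M)/δ⁴`, so `4·S(M, a) = (σM(N + σ²M)/δ³)² = 4c²`.
-/

namespace Polynomial.Chebyshev

variable (R : Type*) [CommRing R]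

theorem U_sq_add_U_sq (n : ℤ) :
    U R n ^ 2 + U R (n + 1) ^ 2 - 2 * X * U R n * U R (n + 1) = 1 := by
  have h := congrArg (·.comp (2 * X)) (S_sq_add_S_sq R n)
  simp only [sub_comp, add_comp, mul_comp, pow_comp, X_comp, one_comp, S_comp_two_mul_X] at h
  linear_combination h

theorem T_sq_sub_mul_U_sq (n : ℤ) : T R n ^ 2 - (X ^ 2 - 1) * U R (n - 1) ^ 2 = 1 := by
  have h := U_sq_add_U_sq R (n - 1)
  rw [sub_add_cancel] at h
  rw [T_eq_U_sub_X_mul_U]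
  linear_combination h

end Polynomial.Chebyshev

theorem T_sq_sub_mul_U_sq (n x : ℤ) : T n x ^ 2 - (x ^ 2 - 1) * U (n - 1) x ^ 2 = 1 := by
  simpa [T, U] using congrArg (Polynomial.eval x) (Polynomial.Chebyshev.T_sq_sub_mul_U_sq ℤ n)

theorem four_mul_S (M : ℕ) (a : ℤ) :
    4 * S M a = ((a + M - 1) * (a + M)) ^ 2 - ((a - 1) * a) ^ 2 := by
  induction M with
  | zero => simp [S]
  | succ k ih =>
    rw [S, Finset.sum_range_succ, ← S, mul_add, ih]
    push_cast
    ring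

theorem sq_mul_sub_sq_mul_eq_four_mul_sq {R : Type*} [CommRing R] [IsDomain R] [NeZero (2 : R)]
    {δ σ M N a c : R} (hδ : δ ≠ 0) (hN : N ^ 2 - (σ ^ 4 - δ ^ 4) * M ^ 2 = δ ^ 4)
    (ha : 2 * δ ^ 2 * a = N + (σ ^ 2 - δ ^ 2) * M + δ ^ 2)
    (hc : 2 * δ ^ 3 * c = σ * M * (N + σ ^ 2 * M)) :
    ((a + M - 1) * (a + M)) ^ 2 - ((a - 1) * a) ^ 2 = 4 * c ^ 2 := by
  have hlen : δ ^ 2 * (2 * a + M - 1) = N + σ ^ 2 * M := by linear_combination ha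
  have hsum : δ ^ 4 * ((a + M - 1) * (a + M) + (a - 1) * a) = σ ^ 2 * M * (N + σ ^ 2 * M) := by
    refine mul_left_cancel₀ (two_ne_zero (α := R)) ?_
    linear_combination (δ ^ 2 * (2 * a + M - 1) + N + σ ^ 2 * M) * hlen + hN
  refine mul_left_cancel₀ (pow_ne_zero 6 hδ) ?_
  calc δ ^ 6 * (((a + M - 1) * (a + M)) ^ 2 - ((a - 1) * a) ^ 2)
      = M * (δ ^ 2 * (2 * a + M - 1)) * (δ ^ 4 * ((a + M - 1) * (a + M) + (a - 1) * a)) := by ring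
    _ = (σ * M * (N + σ ^ 2 * M)) ^ 2 := by rw [hlen, hsum]; ring
    _ = δ ^ 6 * (4 * c ^ 2) := by rw [← hc]; ring

theorem general_solutions_general (δ σ x y X₁ Y₁ : ℤ)
    (hδ : 0 < δ)
    (hPell : x ^ 2 - (σ ^ 4 - δ ^ 4) * y ^ 2 = 1)
    (hXY : X₁ ^ 2 - (σ ^ 4 - δ ^ 4) * Y₁ ^ 2 = δ ^ 4)
    (n : ℤ) (Mq aq cq : ℚ)
    (hMq : Mq = (X₁ : ℚ) * y * U (n - 1) x + Y₁ * T n x)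
    (haq : aq = (((σ : ℚ) ^ 2 - δ ^ 2) * (X₁ + (σ ^ 2 + δ ^ 2) * Y₁) * y * U (n - 1) x
        + ((X₁ : ℚ) + ((σ : ℚ) ^ 2 - δ ^ 2) * Y₁) * T n x + (δ : ℚ) ^ 2) / (2 * (δ : ℚ) ^ 2))
    (hcq : cq = ((σ : ℚ) / (2 * (δ : ℚ) ^ 3)) * Mq
        * (((σ : ℚ) ^ 2 * X₁ + ((σ : ℚ) ^ 4 - δ ^ 4) * Y₁) * y * U (n - 1) x
            + ((X₁ : ℚ) + (σ : ℚ) ^ 2 * Y₁) * T n x))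
    (M : ℕ) (a c : ℤ)
    (hMeq : (M : ℚ) = Mq) (haeq : (a : ℚ) = aq) (hceq : (c : ℚ) = cq) :
    S M a = c ^ 2 := by
  obtain ⟨t, ht⟩ : ∃ t, t = T n x := ⟨_, rfl⟩
  obtain ⟨u, hu⟩ : ∃ u, u = y * U (n - 1) x := ⟨_, rfl⟩
  obtain ⟨N, hN⟩ : ∃ N, N = X₁ * t + (σ ^ 4 - δ ^ 4) * Y₁ * u := ⟨_, rfl⟩
  have hunit : t ^ 2 - (σ ^ 4 - δ ^ 4) * u ^ 2 = 1 := by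
    rw [ht, hu]
    linear_combination T_sq_sub_mul_U_sq n x + U (n - 1) x ^ 2 * hPell
  have hMQ : (M : ℚ) = X₁ * u + Y₁ * t := by rw [hMeq, hMq, ht, hu]; push_cast; ring
  have hM : (M : ℤ) = X₁ * u + Y₁ * t := by exact_mod_cast hMQ
  have hNM : N ^ 2 - (σ ^ 4 - δ ^ 4) * M ^ 2 = δ ^ 4 := by
    rw [hN, hM]
    linear_combination (X₁ ^ 2 - (σ ^ 4 - δ ^ 4) * Y₁ ^ 2) * hunit + hXY
  have ha : 2 * δ ^ 2 * a = N + (σ ^ 2 - δ ^ 2) * M + δ ^ 2 := by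
    have : (2 * δ ^ 2 * a : ℚ) = N + (σ ^ 2 - δ ^ 2) * M + δ ^ 2 := by
      rw [haeq, haq, hMQ, hN, ht, hu]; push_cast; field_simp; ring
    exact_mod_cast this
  have hc : 2 * δ ^ 3 * c = σ * M * (N + σ ^ 2 * M) := by
    have : (2 * δ ^ 3 * c : ℚ) = σ * M * (N + σ ^ 2 * M) := by
      rw [hceq, hcq, ← hMeq, hMQ, hN, ht, hu]; push_cast; field_simp; ring
    exact_mod_cast this
  refine mul_left_cancel₀ (four_ne_zero (α := ℤ)) ?_
  rw [four_mul_S]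
  exact sq_mul_sub_sq_mul_eq_four_mul_sq hδ.ne' hNM ha hc

/-- General solutions: with `D = σ⁴ − δ⁴`, `(x,y)` a positive solution of the simple
Pell equation and `(X₁,Y₁)` a solution of `X² − DY² = δ⁴`, whenever the rationals
`Mₙ`, `aₙ`, `cₙ` defined from Chebyshev polynomials are positive integers, they solve
`S(Mₙ,aₙ) = cₙ²`. -/
theorem general_solutions (δ σ x y X₁ Y₁ : ℤ)
    (hδ : 0 < δ) (hσ : 0 < σ) (hgcd : Int.gcd δ σ = 1) (hlt : δ < σ)
    (hx : 0 < x) (hy : 0 < y)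
    (hPell : x ^ 2 - (σ ^ 4 - δ ^ 4) * y ^ 2 = 1)
    (hXY : X₁ ^ 2 - (σ ^ 4 - δ ^ 4) * Y₁ ^ 2 = δ ^ 4)
    (n : ℤ) (Mq aq cq : ℚ)
    (hMq : Mq = (X₁ : ℚ) * y * U (n - 1) x + Y₁ * T n x)
    (haq : aq = (((σ : ℚ) ^ 2 - δ ^ 2) * (X₁ + (σ ^ 2 + δ ^ 2) * Y₁) * y * U (n - 1) x
        + ((X₁ : ℚ) + ((σ : ℚ) ^ 2 - δ ^ 2) * Y₁) * T n x + (δ : ℚ) ^ 2) / (2 * (δ : ℚ) ^ 2))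
    (hcq : cq = ((σ : ℚ) / (2 * (δ : ℚ) ^ 3)) * Mq
        * (((σ : ℚ) ^ 2 * X₁ + ((σ : ℚ) ^ 4 - δ ^ 4) * Y₁) * y * U (n - 1) x
            + ((X₁ : ℚ) + (σ : ℚ) ^ 2 * Y₁) * T n x))
    (M : ℕ) (a c : ℤ) (hMpos : 0 < M) (hapos : 0 < a) (hcpos : 0 < c)
    (hMeq : (M : ℚ) = Mq) (haeq : (a : ℚ) = aq) (hceq : (c : ℚ) = cq) :
    S M a = c ^ 2 :=
  general_solutions_general δ σ x y X₁ Y₁ hδ hPell hXY n Mq aq cq hMq haq hcq M a c hMeq haeq hceq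
end

section
/- Let δ, σ be positive integers with gcd(δ,σ) = 1 and δ < σ, set D = σ⁴ − δ⁴, and let x, y be positive integers with x² − D·y² = 1. For a positive integer n, set M = δ²·y·U_{n−1}(x). If a and c are positive integers with 2a = T_n(x) + (σ²−δ²)·y·U_{n−1}(x) + 1 and 2c = σ·δ·y·U_{n−1}(x)·( σ²·y·U_{n−1}(x) + T_n(x) ), then S(M,a) = c². (This is the solution family arising from the fundamental solution (X₁,Y₁) = (δ²,0).) -/
lemma U_rec (x m : ℤ) : U (m + 2) x = 2 * x * U (m + 1) x - U m x := by
  simp [U, Polynomial.Chebyshev.U_add_two]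

lemma Usq (x : ℤ) : ∀ n : ℤ,
    U n x ^ 2 - 2 * x * U n x * U (n - 1) x + U (n - 1) x ^ 2 = 1 := by
  intro n
  induction n using Polynomial.Chebyshev.induct with
  | zero => norm_num [U, show (0:ℤ) - 1 = -1 by ring, Polynomial.Chebyshev.U_neg_one]
  | one => norm_num [U, Polynomial.Chebyshev.U_one]; ring
  | add_two k h1 _ =>
      have hr := U_rec x (k : ℤ)
      have e1 : ((k : ℤ) + 1 - 1) = (k : ℤ) := by ring
      rw [e1] at h1
      have e2 : ((k : ℤ) + 2 - 1) = (k : ℤ) + 1 := by ring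
      rw [e2]
      linear_combination (U ((k:ℤ)+2) x + U ((k:ℤ)) x - 2*x*U ((k:ℤ)+1) x + 2*x*U ((k:ℤ)+1) x - U ((k:ℤ)+2) x - U ((k:ℤ)) x) * hr + h1 + (U ((k:ℤ)+2) x - U ((k:ℤ)) x) * hr
  | neg_add_one k h1 h2 =>
      -- goal at -k - 1 ; h1 : motive (-k), h2 : motive (-k + 1)
      have hr := U_rec x (-(k : ℤ) - 2)
      have er : (-(k:ℤ) - 2 + 2) = -(k:ℤ) := by ring
      have er1 : (-(k:ℤ) - 2 + 1) = -(k:ℤ) - 1 := by ring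
      rw [er, er1] at hr
      -- hr : U (-k) x = 2x * U (-k-1) x - U (-k-2) x
      have e2 : (-(k : ℤ) - 1 - 1) = -(k:ℤ) - 2 := by ring
      rw [e2]
      -- h1 : U (-k) x ^2 - 2x U(-k) U(-k-1) + U(-k-1)^2 = 1
      linear_combination h1 - (U (-(k:ℤ)) x - U (-(k:ℤ)-2) x) * hr
  done

lemma pell_cheb (x : ℤ) (n : ℤ) :
    T n x ^ 2 - (x ^ 2 - 1) * U (n - 1) x ^ 2 = 1 := by
  have hT : T n x = U n x - x * U (n - 1) x := by
    simp [T, U, Polynomial.Chebyshev.T_eq_U_sub_X_mul_U]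
  have h := Usq x n
  linear_combination (T n x + U n x - x * U (n-1) x) * hT + h

lemma sum4 (a : ℤ) : ∀ M : ℕ, 4 * S M a = ((a + M - 1) * (a + M)) ^ 2 - ((a - 1) * a) ^ 2 := by
  intro M
  induction M with
  | zero => simp [S]
  | succ m ih =>
      have : S (m + 1) a = S m a + (a + m) ^ 3 := by
        simp [S, Finset.sum_range_succ]
      rw [this]
      push_cast
      push_cast at ih
      linear_combination ih

/-- The solution family arising from the fundamental solution `(X₁,Y₁) = (δ²,0)`:
with `D = σ⁴ − δ⁴`, `(x,y)` a positive solution of `x² − Dy² = 1`, `n` a positive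
integer, `M = δ²·y·U_{n−1}(x)`, `2a = T_n(x) + (σ²−δ²)·y·U_{n−1}(x) + 1` and
`2c = σδ·y·U_{n−1}(x)·(σ²·y·U_{n−1}(x) + T_n(x))`, one has `S(M,a) = c²`. -/
theorem solutions_from_delta_sq_zero (δ σ x y : ℤ)
    (hδ : 0 < δ) (hσ : 0 < σ) (hgcd : Int.gcd δ σ = 1) (hlt : δ < σ)
    (hx : 0 < x) (hy : 0 < y)
    (hPell : x ^ 2 - (σ ^ 4 - δ ^ 4) * y ^ 2 = 1)
    (n : ℤ) (hn : 0 < n)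
    (M : ℕ) (hM : (M : ℤ) = δ ^ 2 * y * U (n - 1) x)
    (a c : ℤ) (hapos : 0 < a) (hcpos : 0 < c)
    (ha : 2 * a = T n x + (σ ^ 2 - δ ^ 2) * y * U (n - 1) x + 1)
    (hc : 2 * c = σ * δ * y * U (n - 1) x * (σ ^ 2 * y * U (n - 1) x + T n x)) :
    S M a = c ^ 2 := by
  set t := T n x with ht
  set u := y * U (n - 1) x with hu
  -- Pell-type identity for Chebyshev evaluations
  have hP : t ^ 2 - (σ ^ 4 - δ ^ 4) * u ^ 2 = 1 := by
    have h := pell_cheb x n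
    have : (x ^ 2 - 1) = (σ ^ 4 - δ ^ 4) * y ^ 2 := by linarith
    calc t ^ 2 - (σ ^ 4 - δ ^ 4) * u ^ 2
        = t ^ 2 - (x ^ 2 - 1) * U (n-1) x ^ 2 := by rw [this, hu]; ring
      _ = 1 := h
  have hM' : (M : ℤ) = δ ^ 2 * u := by rw [hM, hu]; ring
  have ha' : 2 * a = t + (σ ^ 2 - δ ^ 2) * u + 1 := by rw [ha, ht, hu]; ring
  have hc' : 2 * c = σ * δ * u * (σ ^ 2 * u + t) := by rw [hc, ht, hu]; ring
  have hS4 := sum4 a M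
  have hv : 4 * ((a + (M:ℤ) - 1) * (a + (M:ℤ))) = (t + (σ^2 + δ^2)*u)^2 - 1 := by
    linear_combination (2*a + 2*(M:ℤ) + t + (σ^2+δ^2)*u - 1) * ha'
      + 2*(2*a + 2*(M:ℤ) + t + (σ^2+δ^2)*u - 1) * hM'
  have hw : 4 * ((a - 1) * a) = (t + (σ^2 - δ^2)*u)^2 - 1 := by
    linear_combination (2*a + t + (σ^2-δ^2)*u - 1) * ha'
  have h64 : 64 * S M a =
      ((t + (σ^2+δ^2)*u)^2 - 1)^2 - ((t + (σ^2-δ^2)*u)^2 - 1)^2 := by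
    linear_combination 16 * hS4
      + (4*((a + (M:ℤ) - 1) * (a + (M:ℤ))) + (t + (σ^2+δ^2)*u)^2 - 1) * hv
      - (4*((a - 1) * a) + (t + (σ^2-δ^2)*u)^2 - 1) * hw
  have hfin : ((t + (σ^2+δ^2)*u)^2 - 1)^2 - ((t + (σ^2-δ^2)*u)^2 - 1)^2 = 64 * c^2 := by
    linear_combination (2 * (4*δ^2*u*(t + σ^2*u))) * hP
      - 16 * (2*c + σ*δ*u*(σ^2*u + t)) * hc'
  have : 64 * S M a = 64 * c ^ 2 := by rw [h64, hfin]
  linarith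
end
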